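/- Let ν be a Borel measure on ℝ with ∫_ℝ (|β|² ∧ 1) ν(dβ) < ∞, let a ∈ ℝ and q ≥ 0, and define A(α) = α a + ∫_ℝ (τ(αβ) − α τ(β)) ν(dβ), ζ(α) = ∫_ℝ (|αβ|² ∧ 1) ν(dβ) + α² q, and η(α) = sup_{γ ∈ [−1,1]} |A(αγ)|. Then for every α ≥ 0, η(2α) ≤ 2 η(α) + ζ(α); consequently ζ(2α) + η(2α) ≤ 5 (ζ(α) + η(α)). -/

import Mathlib

/-!
The truncation `τ` is the clamp to `[-1, 1]`, and its doubling defect satisfies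
`|τ(2x) - 2τ(x)| ≤ |x|² ∧ 1`. The drift terms cancel in `A(2s) - 2A(s)`, which is therefore the
`ν`-integral of this defect at `x = sβ`; hence `|A(2s)| ≤ 2|A(s)| + ∫ (|αβ|² ∧ 1) dν ≤ 2η(α) + ζ(α)`
whenever `|s| ≤ α`, and taking the supremum over `s = αγ` bounds `η(2α)`. The second inequality
adds `ζ(2α) ≤ 4ζ(α)`, from `|2x|² ∧ 1 ≤ 4(|x|² ∧ 1)`, and `η ≥ 0`. The bound
`|τ(sβ) - sτ(β)| ≤ (1 + |s|)²(|β|² ∧ 1)` makes all integrals finite and the family `|A(αγ)|` bounded.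
-/

open MeasureTheory

/-- The truncation function `τ(α) = α` if `|α| ≤ 1` and `τ(α) = α/|α|` otherwise. -/
noncomputable def tau (α : ℝ) : ℝ := if |α| ≤ 1 then α else α / |α|

lemma min_mul_le_mul_min {k t : ℝ} (hk : 1 ≤ k) : min (k * t) 1 ≤ k * min t 1 := by
  rw [mul_min_of_nonneg _ _ (zero_le_one.trans hk), mul_one]
  exact min_le_min le_rfl hk

lemma min_sq_abs_mul_le (c x : ℝ) : min (|c * x| ^ 2) 1 ≤ (1 + c ^ 2) * min (|x| ^ 2) 1 := by
  refine le_trans ?_ (min_mul_le_mul_min (le_add_of_nonneg_right (sq_nonneg c)))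
  gcongr
  rw [abs_mul, mul_pow, sq_abs]
  nlinarith [sq_nonneg |x|]

lemma tau_eq_max_min (x : ℝ) : tau x = max (-1) (min x 1) := by
  unfold tau
  split_ifs with h
  · rw [abs_le] at h; rw [min_eq_left h.2, max_eq_right h.1]
  · rcases le_or_gt 0 x with hx | hx
    · rw [abs_of_nonneg hx] at h ⊢
      rw [div_self (by linarith), min_eq_right (by linarith), max_eq_right (by norm_num)]
    · rw [abs_of_neg hx] at h ⊢
      rw [div_neg, div_self hx.ne, min_eq_left (by linarith), max_eq_left (by linarith)]

@[fun_prop]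
lemma measurable_tau : Measurable tau := by
  rw [funext tau_eq_max_min]
  fun_prop

lemma abs_tau_le_one (x : ℝ) : |tau x| ≤ 1 := by
  rw [tau_eq_max_min, abs_le]
  exact ⟨le_max_left _ _, max_le (by norm_num) (min_le_right _ _)⟩

lemma tau_of_abs_le_one {x : ℝ} (h : |x| ≤ 1) : tau x = x := if_pos h

lemma abs_tau_sub_self_le (x : ℝ) : |tau x - x| ≤ |x| ^ 2 := by
  rw [tau_eq_max_min, sq_abs, abs_le]
  simp only [max_def, min_def]
  split_ifs <;> constructor <;> nlinarith

lemma abs_tau_two_mul_sub_le (x : ℝ) : |tau (2 * x) - 2 * tau x| ≤ min (|x| ^ 2) 1 := by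
  rw [tau_eq_max_min, tau_eq_max_min, sq_abs, le_min_iff, abs_le, abs_le]
  simp only [max_def, min_def]
  split_ifs <;> refine ⟨⟨?_, ?_⟩, ?_, ?_⟩ <;> nlinarith

lemma abs_tau_mul_sub_le (s x : ℝ) :
    |tau (s * x) - s * tau x| ≤ (1 + |s|) ^ 2 * min (|x| ^ 2) 1 := by
  rcases le_or_gt |x| 1 with hx | hx
  · have hsq : |s| ^ 2 ≤ (1 + |s|) ^ 2 := pow_le_pow_left₀ (abs_nonneg s) (by linarith) 2
    calc |tau (s * x) - s * tau x| = |tau (s * x) - s * x| := by rw [tau_of_abs_le_one hx]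
      _ ≤ |s| ^ 2 * |x| ^ 2 := by simpa only [abs_mul, mul_pow] using abs_tau_sub_self_le (s * x)
      _ ≤ (1 + |s|) ^ 2 * min (|x| ^ 2) 1 := by
        rw [min_eq_left (pow_le_one₀ (abs_nonneg x) hx)]
        gcongr
  · calc |tau (s * x) - s * tau x| ≤ |tau (s * x)| + |s| * |tau x| := by
          rw [← abs_mul]; exact abs_sub _ _
      _ ≤ 1 + |s| * 1 := by gcongr <;> exact abs_tau_le_one _
      _ ≤ (1 + |s|) ^ 2 * min (|x| ^ 2) 1 := by
        rw [min_eq_right (one_le_pow₀ hx.le)]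
        nlinarith [abs_nonneg s]

noncomputable def truncatedDrift (ν : Measure ℝ) (a α : ℝ) : ℝ :=
  α * a + ∫ β, (tau (α * β) - α * tau β) ∂ν

section LevyMeasure

variable {ν : Measure ℝ} (hν : ∫⁻ β, ENNReal.ofReal (min (|β| ^ 2) 1) ∂ν < ⊤)
include hν

lemma integrable_min_sq_one : Integrable (fun β => min (|β| ^ 2) 1) ν := by
  have h0 : 0 ≤ᵐ[ν] fun β : ℝ => min (|β| ^ 2) 1 := ae_of_all _ fun β => by positivity
  exact ⟨by fun_prop, (hasFiniteIntegral_iff_ofReal h0).2 hν⟩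

lemma integrable_of_abs_le_mul_min_sq {f : ℝ → ℝ} (hf : AEStronglyMeasurable f ν) (C : ℝ)
    (hfC : ∀ β, |f β| ≤ C * min (|β| ^ 2) 1) : Integrable f ν :=
  ((integrable_min_sq_one hν).const_mul C).mono' hf (ae_of_all _ hfC)

lemma integrable_tau_mul_sub (s : ℝ) : Integrable (fun β => tau (s * β) - s * tau β) ν :=
  integrable_of_abs_le_mul_min_sq hν
    ((measurable_tau.comp (measurable_const_mul s)).sub
      (measurable_tau.const_mul s)).aestronglyMeasurable _ (abs_tau_mul_sub_le s)

lemma integrable_min_sq_abs_mul (c : ℝ) : Integrable (fun β => min (|c * β| ^ 2) 1) ν :=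
  integrable_of_abs_le_mul_min_sq hν (by fun_prop) _ fun β => by
    rw [abs_of_nonneg (by positivity)]
    exact min_sq_abs_mul_le c β

lemma integrable_tau_two_mul_sub (s : ℝ) :
    Integrable (fun β => tau (2 * (s * β)) - 2 * tau (s * β)) ν :=
  integrable_of_abs_le_mul_min_sq hν (by fun_prop) _ fun β =>
    (abs_tau_two_mul_sub_le _).trans (min_sq_abs_mul_le s β)

lemma integral_min_sq_abs_two_mul_le (α : ℝ) :
    ∫ β, min (|2 * α * β| ^ 2) 1 ∂ν ≤ 4 * ∫ β, min (|α * β| ^ 2) 1 ∂ν := by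
  rw [← integral_const_mul]
  refine integral_mono (integrable_min_sq_abs_mul hν _)
    ((integrable_min_sq_abs_mul hν α).const_mul 4) fun β => ?_
  have h4 : |2 * α * β| ^ 2 = 4 * |α * β| ^ 2 := by rw [mul_assoc, abs_mul, mul_pow]; norm_num
  exact h4 ▸ min_mul_le_mul_min (by norm_num)

lemma truncatedDrift_two_mul (a s : ℝ) :
    truncatedDrift ν a (2 * s) =
      2 * truncatedDrift ν a s + ∫ β, (tau (2 * (s * β)) - 2 * tau (s * β)) ∂ν := by
  have hsplit : (fun β => tau (2 * s * β) - 2 * s * tau β) = fun β =>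
      (tau (2 * (s * β)) - 2 * tau (s * β)) + 2 * (tau (s * β) - s * tau β) := by
    funext β; rw [mul_assoc]; ring
  rw [truncatedDrift, truncatedDrift, hsplit, integral_add (integrable_tau_two_mul_sub hν s)
    ((integrable_tau_mul_sub hν s).const_mul 2), integral_const_mul]
  ring

lemma abs_truncatedDrift_le (a : ℝ) {s c : ℝ} (hs : |s| ≤ c) :
    |truncatedDrift ν a s| ≤ c * |a| + (1 + c) ^ 2 * ∫ β, min (|β| ^ 2) 1 ∂ν := by
  have hI : 0 ≤ ∫ β, min (|β| ^ 2) 1 ∂ν := integral_nonneg fun β => by positivity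
  have hint : |∫ β, (tau (s * β) - s * tau β) ∂ν| ≤ (1 + c) ^ 2 * ∫ β, min (|β| ^ 2) 1 ∂ν :=
    calc |∫ β, (tau (s * β) - s * tau β) ∂ν|
        ≤ ∫ β, (1 + |s|) ^ 2 * min (|β| ^ 2) 1 ∂ν :=
          abs_integral_le_integral_abs.trans <| integral_mono (integrable_tau_mul_sub hν s).abs
            ((integrable_min_sq_one hν).const_mul _) (abs_tau_mul_sub_le s)
      _ ≤ (1 + c) ^ 2 * ∫ β, min (|β| ^ 2) 1 ∂ν := by
          rw [integral_const_mul]; gcongr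
  calc |truncatedDrift ν a s| ≤ |s| * |a| + |∫ β, (tau (s * β) - s * tau β) ∂ν| := by
        rw [truncatedDrift, ← abs_mul]; exact abs_add_le _ _
    _ ≤ c * |a| + (1 + c) ^ 2 * ∫ β, min (|β| ^ 2) 1 ∂ν := by gcongr

lemma abs_truncatedDrift_two_mul_le (a : ℝ) {s α : ℝ} (hs : |s| ≤ α) :
    |truncatedDrift ν a (2 * s)| ≤
      2 * |truncatedDrift ν a s| + ∫ β, min (|α * β| ^ 2) 1 ∂ν := by
  have hrem : |∫ β, (tau (2 * (s * β)) - 2 * tau (s * β)) ∂ν| ≤ ∫ β, min (|α * β| ^ 2) 1 ∂ν :=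
    abs_integral_le_integral_abs.trans <| integral_mono (integrable_tau_two_mul_sub hν s).abs
      (integrable_min_sq_abs_mul hν α) fun β =>
        (abs_tau_two_mul_sub_le _).trans <| min_le_min_right 1 <| by
          rw [abs_mul, abs_mul]
          exact pow_le_pow_left₀ (by positivity)
            (mul_le_mul_of_nonneg_right (hs.trans (le_abs_self α)) (abs_nonneg β)) 2
  rw [truncatedDrift_two_mul hν]
  calc _ ≤ |2 * truncatedDrift ν a s| + |∫ β, (tau (2 * (s * β)) - 2 * tau (s * β)) ∂ν| :=
        abs_add_le _ _
    _ ≤ _ := by rw [abs_mul, abs_two]; gcongr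

end LevyMeasure

lemma abs_mul_coe_le {α : ℝ} (hα : 0 ≤ α) (γ : Set.Icc (-1 : ℝ) 1) : |α * γ| ≤ α := by
  rw [abs_mul, abs_of_nonneg hα]
  exact mul_le_of_le_one_right hα (abs_le.2 γ.2)

lemma ciSup_abs_two_mul_le {f : ℝ → ℝ} {α z : ℝ} (hα : 0 ≤ α)
    (hbdd : BddAbove (Set.range fun γ : Set.Icc (-1 : ℝ) 1 => |f (α * γ)|))
    (hf : ∀ s, |s| ≤ α → |f (2 * s)| ≤ 2 * |f s| + z) :
    ⨆ γ : Set.Icc (-1 : ℝ) 1, |f (2 * α * γ)| ≤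
      2 * (⨆ γ : Set.Icc (-1 : ℝ) 1, |f (α * γ)|) + z := by
  have : Nonempty (Set.Icc (-1 : ℝ) 1) := ⟨⟨0, by norm_num⟩⟩
  refine ciSup_le fun γ => ?_
  calc |f (2 * α * γ)| = |f (2 * (α * γ))| := by rw [mul_assoc]
    _ ≤ 2 * |f (α * γ)| + z := hf _ (abs_mul_coe_le hα γ)
    _ ≤ _ := by gcongr; exact le_ciSup hbdd γ

/-- Doubling (Δ₂) estimate: with `A(α) = αa + ∫ (τ(αβ) − ατ(β)) ν(dβ)`,
`ζ(α) = ∫ (|αβ|² ∧ 1) ν(dβ) + α²q` and `η(α) = sup_{|γ|≤1} |A(αγ)|`, one has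
`η(2α) ≤ 2η(α) + ζ(α)` and `ζ(2α) + η(2α) ≤ 5(ζ(α) + η(α))` for every `α ≥ 0`. -/
theorem eta_two_mul_le
    (ν : Measure ℝ) (hν : ∫⁻ β, ENNReal.ofReal (min (|β| ^ 2) 1) ∂ν < ⊤)
    (a : ℝ) (q : ℝ) (hq : 0 ≤ q)
    (A ζ η : ℝ → ℝ)
    (hA : ∀ α, A α = α * a + ∫ β, (tau (α * β) - α * tau β) ∂ν)
    (hζ : ∀ α, ζ α = (∫ β, min (|α * β| ^ 2) 1 ∂ν) + α ^ 2 * q)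
    (hη : ∀ α, η α = ⨆ γ : Set.Icc (-1 : ℝ) 1, |A (α * γ)|) :
    ∀ α : ℝ, 0 ≤ α →
      η (2 * α) ≤ 2 * η α + ζ α ∧ ζ (2 * α) + η (2 * α) ≤ 5 * (ζ α + η α) := by
  intro α hα
  obtain rfl : A = truncatedDrift ν a := funext hA
  have hbdd : BddAbove (Set.range fun γ : Set.Icc (-1 : ℝ) 1 => |truncatedDrift ν a (α * γ)|) :=
    ⟨_, Set.forall_mem_range.2 fun γ => abs_truncatedDrift_le hν a (abs_mul_coe_le hα γ)⟩
  have hζα : ∫ β, min (|α * β| ^ 2) 1 ∂ν ≤ ζ α := by rw [hζ]; nlinarith [sq_nonneg α]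
  have hη2 : η (2 * α) ≤ 2 * η α + ζ α := by
    rw [hη, hη]
    exact ciSup_abs_two_mul_le hα hbdd fun s hs =>
      (abs_truncatedDrift_two_mul_le hν a hs).trans (by gcongr)
  have hζ2 : ζ (2 * α) ≤ 4 * ζ α := by
    rw [hζ, hζ]; nlinarith [integral_min_sq_abs_two_mul_le hν α, sq_nonneg α]
  have hη0 : 0 ≤ η α := hη α ▸ Real.iSup_nonneg fun _ => abs_nonneg _
  exact ⟨hη2, by linarith⟩
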